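/- arXiv:2601.05146 — 2 statements merged into one kernel-verified Lean document; each statement's English description precedes it below -/
import Mathlib

section
/- Let X be a Banach space, r* > 0, x̄ ∈ X, and T : B̄(x̄, r*) → X a C¹ map. Suppose Y, Z, W ≥ 0 satisfy: ‖T(x̄) − x̄‖ ≤ Y; ‖DT(x̄)‖ ≤ Z; and ‖DT(x) − DT(x̄)‖ ≤ W‖x − x̄‖ for all x ∈ B̄(x̄, r*). If there exists r ∈ (0, r*] with Y + Z r + (1/2) W r² ≤ r and Z + W r < 1, then T has a unique fixed point in the closed ball B̄(x̄, r). -/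
/-!
Along a segment, a Lipschitz bound on the derivative gives the second-order Taylor estimate
`‖T x - T x̄ - DT(x̄)(x - x̄)‖ ≤ W/2 ‖x - x̄‖²`, so the first condition on `r` makes `T` map
`B̄(x̄, r)` into itself. On that ball `‖DT‖ ≤ Z + W r < 1`, so by the mean value inequality `T`
is a contraction there, and the Banach fixed point theorem on the complete ball concludes.
-/

open Metric Set

theorem LipschitzOnWith.existsUnique_fixedPoint {α : Type*} [MetricSpace α] {f : α → α}
    {s : Set α} {K : NNReal} (hf : LipschitzOnWith K f s) (hK : K < 1) (hsc : IsComplete s)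
    (hsf : MapsTo f s s) (hs : s.Nonempty) : ∃! x, x ∈ s ∧ f x = x := by
  obtain ⟨x₀, hx₀⟩ := hs
  have hcontr : ContractingWith K (hsf.restrict f s s) := ⟨hK, hf.mapsToRestrict hsf⟩
  obtain ⟨x, hxs, hfx, -⟩ := hcontr.exists_fixedPoint' hsc hsf hx₀ (edist_ne_top _ _)
  refine ⟨x, ⟨hxs, hfx⟩, fun y ⟨hys, hfy⟩ => ?_⟩
  exact congrArg Subtype.val <|
    hcontr.fixedPoint_unique' (x := ⟨y, hys⟩) (y := ⟨x, hxs⟩) (Subtype.ext hfy) (Subtype.ext hfx)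

section

variable {E F : Type*} [NormedAddCommGroup E] [NormedSpace ℝ E] [NormedAddCommGroup F]
  [NormedSpace ℝ F] {f : E → F} {f' : E → E →L[ℝ] F} {s : Set E} {a x : E} {W : ℝ}

theorem Convex.norm_image_sub_sub_fderiv_le (hs : Convex ℝ s)
    (hf : ∀ y ∈ s, HasFDerivAt f (f' y) y) (hW : ∀ y ∈ s, ‖f' y - f' a‖ ≤ W * ‖y - a‖)
    (ha : a ∈ s) (hx : x ∈ s) : ‖f x - f a - f' a (x - a)‖ ≤ W / 2 * ‖x - a‖ ^ 2 := by
  set v := x - a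
  have hseg : ∀ t ∈ Icc (0 : ℝ) 1, a + t • v ∈ s := fun t ht => hs.add_smul_sub_mem ha hx ht
  have hnorm : ∀ t ∈ Icc (0 : ℝ) 1, ‖a + t • v - a‖ = t * ‖v‖ := fun t ht => by
    rw [add_sub_cancel_left, norm_smul, Real.norm_of_nonneg ht.1]
  set g : ℝ → F := fun t => f (a + t • v) - f a - t • f' a v
  have hg : ∀ t ∈ Icc (0 : ℝ) 1, HasDerivAt g (f' (a + t • v) v - f' a v) t := by
    intro t ht
    have hline : HasDerivAt (fun t : ℝ => a + t • v) v t := by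
      simpa using ((hasDerivAt_id t).smul_const v).const_add a
    exact (((hf _ (hseg t ht)).comp_hasDerivAt t hline).sub_const (f a)).sub
      (by simpa using (hasDerivAt_id t).smul_const (f' a v))
  -- Fencing `‖g t‖` by `W/2 ‖v‖² t²` (rather than by `W ‖v‖² t`) is where the factor `1/2` comes from.
  have hB : ∀ t, HasDerivAt (fun t => W / 2 * ‖v‖ ^ 2 * t ^ 2) (W * ‖v‖ ^ 2 * t) t := fun t =>
    ((hasDerivAt_pow 2 t).const_mul (W / 2 * ‖v‖ ^ 2)).congr_deriv (by ring)
  have hbound : ∀ t ∈ Ico (0 : ℝ) 1, ‖f' (a + t • v) v - f' a v‖ ≤ W * ‖v‖ ^ 2 * t := by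
    intro t ht
    have ht' := Ico_subset_Icc_self ht
    calc ‖f' (a + t • v) v - f' a v‖ = ‖(f' (a + t • v) - f' a) v‖ := rfl
      _ ≤ ‖f' (a + t • v) - f' a‖ * ‖v‖ := (f' (a + t • v) - f' a).le_opNorm v
      _ ≤ W * (t * ‖v‖) * ‖v‖ := by
        gcongr
        rw [← hnorm t ht']
        exact hW _ (hseg t ht')
      _ = W * ‖v‖ ^ 2 * t := by ring
  have := image_norm_le_of_norm_deriv_right_le_deriv_boundary
    (fun t ht => (hg t ht).continuousAt.continuousWithinAt)
    (fun t ht => (hg t (Ico_subset_Icc_self ht)).hasDerivWithinAt) (by simp [g]) hB hbound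
    (right_mem_Icc.2 zero_le_one)
  simpa only [g, one_smul, one_pow, mul_one, v, add_sub_cancel] using this

variable {r Z : ℝ}

theorem lipschitzOnWith_closedBall_of_fderiv (hf : ∀ y ∈ closedBall a r, HasFDerivAt f (f' y) y)
    (hW0 : 0 ≤ W) (hZ : ‖f' a‖ ≤ Z) (hW : ∀ y ∈ closedBall a r, ‖f' y - f' a‖ ≤ W * ‖y - a‖) :
    LipschitzOnWith (Z + W * r).toNNReal f (closedBall a r) := by
  have hbound : ∀ z ∈ closedBall a r, ‖f' z‖ ≤ Z + W * r := fun z hz =>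
    calc ‖f' z‖ ≤ ‖f' a‖ + ‖f' z - f' a‖ := norm_le_insert' _ _
      _ ≤ Z + W * ‖z - a‖ := add_le_add hZ (hW z hz)
      _ ≤ Z + W * r := by gcongr; exact mem_closedBall_iff_norm.1 hz
  refine LipschitzOnWith.of_dist_le' fun x hx y hy => ?_
  simpa only [dist_eq_norm] using
    (convex_closedBall a r).norm_image_sub_le_of_norm_hasFDerivWithin_le
      (fun z hz => (hf z hz).hasFDerivWithinAt) hbound hy hx

end

theorem mapsTo_closedBall_of_fderiv {E : Type*} [NormedAddCommGroup E] [NormedSpace ℝ E]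
    {f : E → E} {f' : E → E →L[ℝ] E} {a : E} {r Y Z W : ℝ}
    (hf : ∀ y ∈ closedBall a r, HasFDerivAt f (f' y) y) (hW0 : 0 ≤ W) (hY : ‖f a - a‖ ≤ Y)
    (hZ : ‖f' a‖ ≤ Z) (hW : ∀ y ∈ closedBall a r, ‖f' y - f' a‖ ≤ W * ‖y - a‖)
    (h : Y + Z * r + 1 / 2 * W * r ^ 2 ≤ r) : MapsTo f (closedBall a r) (closedBall a r) := by
  intro x hx
  have hxa : ‖x - a‖ ≤ r := mem_closedBall_iff_norm.1 hx
  have hTaylor := (convex_closedBall a r).norm_image_sub_sub_fderiv_le hf hW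
    (mem_closedBall_self ((norm_nonneg _).trans hxa)) hx
  rw [mem_closedBall_iff_norm]
  calc ‖f x - a‖ = ‖(f x - f a - f' a (x - a)) + f' a (x - a) + (f a - a)‖ := by congr 1; abel
    _ ≤ ‖f x - f a - f' a (x - a)‖ + ‖f' a (x - a)‖ + ‖f a - a‖ := norm_add₃_le
    _ ≤ W / 2 * ‖x - a‖ ^ 2 + Z * ‖x - a‖ + Y := by
      gcongr
      exact (f' a).le_of_opNorm_le hZ _
    _ ≤ W / 2 * r ^ 2 + Z * r + Y := by
      have hZ0 : 0 ≤ Z := (norm_nonneg _).trans hZ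
      gcongr
    _ ≤ r := by linarith

theorem stmt3_fixed_point_general {X : Type*} [NormedAddCommGroup X] [NormedSpace ℝ X] [CompleteSpace X]
    (rstar : ℝ) (xbar : X) (T : X → X) (DT : X → X →L[ℝ] X)
    (hC1 : ∀ x ∈ closedBall xbar rstar, HasFDerivAt T (DT x) x)
    (Y Z W : ℝ) (hW0 : 0 ≤ W)
    (hY : ‖T xbar - xbar‖ ≤ Y)
    (hZ : ‖DT xbar‖ ≤ Z)
    (hW : ∀ x ∈ closedBall xbar rstar, ‖DT x - DT xbar‖ ≤ W * ‖x - xbar‖)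
    (r : ℝ) (hr : r ∈ Set.Ioc 0 rstar)
    (h1 : Y + Z * r + (1 / 2) * W * r ^ 2 ≤ r)
    (h2 : Z + W * r < 1) :
    ∃! x : X, x ∈ closedBall xbar r ∧ T x = x := by
  obtain ⟨hr0, hrr⟩ := hr
  have hball : closedBall xbar r ⊆ closedBall xbar rstar := closedBall_subset_closedBall hrr
  have hT : ∀ x ∈ closedBall xbar r, HasFDerivAt T (DT x) x := fun x hx => hC1 x (hball hx)
  have hDT : ∀ x ∈ closedBall xbar r, ‖DT x - DT xbar‖ ≤ W * ‖x - xbar‖ :=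
    fun x hx => hW x (hball hx)
  exact (lipschitzOnWith_closedBall_of_fderiv hT hW0 hZ hDT).existsUnique_fixedPoint
    (Real.toNNReal_lt_one.2 h2) isClosed_closedBall.isComplete
    (mapsTo_closedBall_of_fderiv hT hW0 hY hZ hDT h1) ⟨xbar, mem_closedBall_self hr0.le⟩

/-- Simplified Newton–Kantorovich / Banach fixed point theorem with `Y`, `Z`, `W` bounds:
if `‖T x̄ − x̄‖ ≤ Y`, `‖DT x̄‖ ≤ Z`, `‖DT x − DT x̄‖ ≤ W ‖x − x̄‖` on the closed ball of
radius `r*`, and `Y + Z r + W r²/2 ≤ r`, `Z + W r < 1` for some `0 < r ≤ r*`, then `T` has a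
unique fixed point in the closed ball of radius `r` around `x̄`. -/
theorem stmt3_fixed_point {X : Type*} [NormedAddCommGroup X] [NormedSpace ℝ X] [CompleteSpace X]
    (rstar : ℝ) (hrstar : 0 < rstar) (xbar : X) (T : X → X) (DT : X → X →L[ℝ] X)
    (hC1 : ∀ x ∈ closedBall xbar rstar, HasFDerivAt T (DT x) x)
    (Y Z W : ℝ) (hY0 : 0 ≤ Y) (hZ0 : 0 ≤ Z) (hW0 : 0 ≤ W)
    (hY : ‖T xbar - xbar‖ ≤ Y)
    (hZ : ‖DT xbar‖ ≤ Z)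
    (hW : ∀ x ∈ closedBall xbar rstar, ‖DT x - DT xbar‖ ≤ W * ‖x - xbar‖)
    (r : ℝ) (hr : r ∈ Set.Ioc 0 rstar)
    (h1 : Y + Z * r + (1 / 2) * W * r ^ 2 ≤ r)
    (h2 : Z + W * r < 1) :
    ∃! x : X, x ∈ closedBall xbar r ∧ T x = x :=
  stmt3_fixed_point_general rstar xbar T DT hC1 Y Z W hW0 hY hZ hW r hr h1 h2
end

section
/- Let X = ∏_{m=1}^M X^m be a product of Banach spaces, x̄ ∈ X, r* ∈ ℝ_{>0}^M, and T : box(x̄, r*) → X a C¹ map, where box(x̄, r) = { x : ‖π^m(x − x̄)‖ ≤ r^m for all m }. Suppose nonnegative numbers Y^m, Z^m_i, W^m_{ij} satisfy ‖π^m(T(x̄) − x̄)‖ ≤ Y^m, ‖π^m D_i T(x̄)‖ ≤ Z^m_i, and ‖π^m(D_i T(x) − D_i T(x̄))‖ ≤ ∑_j W^m_{ij} ‖π^j(x − x̄)‖ for all x ∈ box(x̄, r*). If there exist r ≤ r* and η ∈ ℝ_{>0}^M with, for each m, Y^m + ∑_i Z^m_i r^i + (1/2)∑_{i,j} W^m_{ij}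 r^i r^j ≤ r^m and ∑_i Z^m_i η^i + ∑_{i,j} W^m_{ij} η^i r^j < η^m, then T has a unique fixed point in box(x̄, r). -/
open Set Metric NNReal

/-!
Rescaling the `i`-th factor by `1 / η i` turns the sup norm into the weighted norm
`maxᵢ ‖x i‖ / η i`. Along segments of the box, `Z` and `W` bound every component of `DT`, so the
mean value inequality gives two facts: the first radii inequality makes `T` map `box x̄ r` into
itself (the `W`-term is integrated along the segment, hence the factor `1 / 2`), and `T` is
Lipschitz on `box x̄ r` with matrix `Z + W r`, which the second inequality turns into a contraction
for the weighted norm. Banach's fixed point theorem on the closed box concludes.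
-/

theorem norm_sub_le_of_hasDerivAt_of_norm_le_add_mul {E : Type*} [NormedAddCommGroup E]
    [NormedSpace ℝ E] {f f' : ℝ → E} {a b : ℝ}
    (hf : ∀ t ∈ Icc (0 : ℝ) 1, HasDerivAt f (f' t) t)
    (bound : ∀ t ∈ Icc (0 : ℝ) 1, ‖f' t‖ ≤ a + t * b) :
    ‖f 1 - f 0‖ ≤ a + b / 2 := by
  have hB (t : ℝ) : HasDerivAt (fun s => a * s + b / 2 * s ^ 2) (a + t * b) t := by
    refine (((hasDerivAt_id t).const_mul a).add
      ((hasDerivAt_pow 2 t).const_mul (b / 2))).congr_deriv ?_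
    simp only [Nat.cast_ofNat]; ring
  have := image_norm_le_of_norm_deriv_right_le_deriv_boundary (f := fun t => f t - f 0)
    (fun t ht => ((hf t ht).sub_const _).continuousAt.continuousWithinAt)
    (fun t ht => ((hf t (Ico_subset_Icc_self ht)).sub_const _).hasDerivWithinAt)
    (by simp) hB (fun t ht => bound t (Ico_subset_Icc_self ht)) (right_mem_Icc.2 zero_le_one)
  simpa using this

theorem Convex.norm_sub_le_of_hasFDerivAt_of_norm_le_add_mul {E F : Type*}
    [NormedAddCommGroup E] [NormedSpace ℝ E] [NormedAddCommGroup F] [NormedSpace ℝ F]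
    {s : Set E} (hs : Convex ℝ s) {f : E → F} {f' : E → E →L[ℝ] F}
    (hf : ∀ z ∈ s, HasFDerivAt f (f' z) z) {x y : E} (hx : x ∈ s) (hy : y ∈ s) {a b : ℝ}
    (bound : ∀ t ∈ Icc (0 : ℝ) 1, ‖f' (x + t • (y - x)) (y - x)‖ ≤ a + t * b) :
    ‖f y - f x‖ ≤ a + b / 2 := by
  have hline (t : ℝ) : HasDerivAt (fun t : ℝ => x + t • (y - x)) (y - x) t := by
    simpa using ((hasDerivAt_id t).smul_const (y - x)).const_add x
  simpa using norm_sub_le_of_hasDerivAt_of_norm_le_add_mul (f := fun t => f (x + t • (y - x)))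
    (fun t ht => (hf _ (hs.add_smul_sub_mem hx hy ht)).comp_hasDerivAt t (hline t)) bound

theorem ContinuousLinearMap.norm_apply_le_sum_of_norm_apply_single_le {ι : Type*} [Fintype ι]
    [DecidableEq ι] {X : ι → Type*} [∀ i, NormedAddCommGroup (X i)] [∀ i, NormedSpace ℝ (X i)]
    {F : Type*} [NormedAddCommGroup F] [NormedSpace ℝ F] (A : (∀ i, X i) →L[ℝ] F) {C : ι → ℝ}
    (hA : ∀ i (v : X i), ‖A (Pi.single i v)‖ ≤ C i * ‖v‖) (h : ∀ i, X i) :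
    ‖A h‖ ≤ ∑ i, C i * ‖h i‖ :=
  calc ‖A h‖ = ‖∑ i, A (Pi.single i (h i))‖ := by rw [← map_sum, Finset.univ_sum_single]
    _ ≤ ∑ i, ‖A (Pi.single i (h i))‖ := norm_sum_le _ _
    _ ≤ ∑ i, C i * ‖h i‖ := Finset.sum_le_sum fun i _ => hA i (h i)

theorem exists_lt_one_forall_le_mul {ι : Type*} [Fintype ι] {a b : ι → ℝ} (hb : ∀ i, 0 < b i)
    (hab : ∀ i, a i < b i) : ∃ K : ℝ≥0, K < 1 ∧ ∀ i, a i ≤ K * b i := by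
  refine ⟨Finset.univ.sup fun i => (a i / b i).toNNReal,
    (Finset.sup_lt_iff zero_lt_one).2 fun i _ =>
      Real.toNNReal_lt_one.2 ((div_lt_one (hb i)).2 (hab i)),
    fun i => (div_le_iff₀ (hb i)).1 ((Real.le_coe_toNNReal _).trans ?_)⟩
  exact_mod_cast Finset.le_sup (f := fun i => (a i / b i).toNNReal) (Finset.mem_univ i)

theorem Homeomorph.existsUnique_fixedPoint_of_dist_le_mul {α β : Type*} [TopologicalSpace α]
    [MetricSpace β] [CompleteSpace β] (Φ : α ≃ₜ β) {s : Set α} (hs : IsClosed s)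
    (hne : s.Nonempty) {T : α → α} (hT : MapsTo T s s) {K : ℝ≥0} (hK : K < 1)
    (hdist : ∀ x ∈ s, ∀ y ∈ s, dist (Φ (T x)) (Φ (T y)) ≤ K * dist (Φ x) (Φ y)) :
    ∃! x, x ∈ s ∧ T x = x := by
  set g : β → β := Φ ∘ T ∘ Φ.symm
  have hg : MapsTo g (Φ.symm ⁻¹' s) (Φ.symm ⁻¹' s) := fun y hy => by simpa [g] using hT hy
  have hcontr : ContractingWith K (hg.restrict g _ _) := ⟨hK, LipschitzWith.of_dist_le_mul
    fun y z => by simpa [g, Subtype.dist_eq] using hdist _ y.2 _ z.2⟩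
  obtain ⟨x₀, hx₀⟩ := hne
  obtain ⟨y, hy, hgy, -⟩ := hcontr.exists_fixedPoint' (hs.preimage Φ.symm.continuous).isComplete
    hg (x := Φ x₀) (by simpa using hx₀) (edist_ne_top _ _)
  have hfix : T (Φ.symm y) = Φ.symm y := by simpa [g] using congrArg Φ.symm hgy
  refine ⟨Φ.symm y, ⟨hy, hfix⟩, fun x ⟨hx, hTx⟩ => Φ.injective ?_⟩
  have hd := hdist x hx _ hy
  rw [hTx, hfix] at hd
  have hK' : (K : ℝ) < 1 := hK
  exact dist_le_zero.1 (by nlinarith [dist_nonneg (x := Φ x) (y := Φ (Φ.symm y))])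

section Box

variable {ι : Type*} {X : ι → Type*} [∀ i, NormedAddCommGroup (X i)]

def box (c : ∀ i, X i) (r : ι → ℝ) : Set (∀ i, X i) := {x | ∀ i, ‖x i - c i‖ ≤ r i}

variable {c : ∀ i, X i} {r : ι → ℝ}

theorem box_eq_pi : box c r = univ.pi fun i => closedBall (c i) (r i) := by
  ext x
  simp [box, dist_eq_norm]

theorem convex_box [∀ i, NormedSpace ℝ (X i)] : Convex ℝ (box c r) := by
  rw [box_eq_pi]
  exact convex_pi fun i _ => convex_closedBall _ _

theorem isClosed_box : IsClosed (box c r) := by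
  rw [box_eq_pi]
  exact isClosed_set_pi fun _ _ => isClosed_closedBall

theorem center_mem_box (hr : 0 ≤ r) : c ∈ box c r := fun i => by simpa using hr i

theorem box_mono {r' : ι → ℝ} (h : r ≤ r') : box c r ⊆ box c r' := fun _ hx i => (hx i).trans (h i)

end Box

section Rescale

variable {ι : Type*} [Fintype ι] {X : ι → Type*} [∀ i, NormedAddCommGroup (X i)]
  [∀ i, NormedSpace ℝ (X i)] {η : ι → ℝ} (hη : ∀ i, 0 < η i)

noncomputable def rescale : (∀ i, X i) ≃ₜ (∀ i, X i) :=
  Homeomorph.piCongrRight fun i => Homeomorph.smulOfNeZero (η i)⁻¹ (inv_ne_zero (hη i).ne')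

theorem dist_rescale_le_iff {x y : ∀ i, X i} {c : ℝ} (hc : 0 ≤ c) :
    dist (rescale hη x) (rescale hη y) ≤ c ↔ ∀ i, ‖x i - y i‖ ≤ c * η i := by
  refine (dist_pi_le_iff hc).trans (forall_congr' fun i => ?_)
  simp only [rescale, Homeomorph.piCongrRight_apply, Homeomorph.smulOfNeZero_apply,
    dist_eq_norm, ← smul_sub, norm_smul, norm_inv, Real.norm_of_nonneg (hη i).le,
    inv_mul_le_iff₀ (hη i), mul_comm]

theorem dist_rescale_le_mul_of_le_sum {L : ι → ι → ℝ} {K : ℝ≥0} (hL : ∀ m i, 0 ≤ L m i)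
    (hK : ∀ m, ∑ i, L m i * η i ≤ K * η m) {u v x y : ∀ i, X i}
    (huv : ∀ m, ‖u m - v m‖ ≤ ∑ i, L m i * ‖x i - y i‖) :
    dist (rescale hη u) (rescale hη v) ≤ K * dist (rescale hη x) (rescale hη y) := by
  set d := dist (rescale hη x) (rescale hη y)
  have hxy : ∀ i, ‖x i - y i‖ ≤ d * η i := (dist_rescale_le_iff hη dist_nonneg).1 le_rfl
  refine (dist_rescale_le_iff hη (by positivity)).2 fun m => ?_
  calc ‖u m - v m‖ ≤ ∑ i, L m i * (d * η i) :=
        (huv m).trans (Finset.sum_le_sum fun i _ => mul_le_mul_of_nonneg_left (hxy i) (hL m i))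
    _ = d * ∑ i, L m i * η i := by
          rw [Finset.mul_sum]; exact Finset.sum_congr rfl fun i _ => by ring
    _ ≤ d * (K * η m) := mul_le_mul_of_nonneg_left (hK m) dist_nonneg
    _ = K * d * η m := by ring

end Rescale

section RadiiPolynomial

variable {ι : Type*} [Fintype ι] [DecidableEq ι] {X : ι → Type*} [∀ i, NormedAddCommGroup (X i)]
  [∀ i, NormedSpace ℝ (X i)] {xbar : ∀ i, X i} {rstar r : ι → ℝ} {T : (∀ i, X i) → ∀ i, X i}
  {DT : (∀ i, X i) → (∀ i, X i) →L[ℝ] ∀ i, X i} {Z : ι → ι → ℝ} {W : ι → ι → ι → ℝ}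

theorem norm_deriv_apply_le_sum
    (hZ : ∀ m i, ∀ h : X i, ‖DT xbar (Pi.single i h) m‖ ≤ Z m i * ‖h‖)
    (hW : ∀ x ∈ box xbar rstar, ∀ m i, ∀ h : X i,
      ‖(DT x - DT xbar) (Pi.single i h) m‖ ≤ (∑ j, W m i j * ‖x j - xbar j‖) * ‖h‖)
    {z : ∀ i, X i} (hz : z ∈ box xbar rstar) (h : ∀ i, X i) (m : ι) :
    ‖DT z h m‖ ≤ ∑ i, (Z m i + ∑ j, W m i j * ‖z j - xbar j‖) * ‖h i‖ := by
  refine ((ContinuousLinearMap.proj m).comp (DT z)).norm_apply_le_sum_of_norm_apply_single_le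
    (fun i v => ?_) h
  calc ‖DT z (Pi.single i v) m‖
      = ‖DT xbar (Pi.single i v) m + (DT z - DT xbar) (Pi.single i v) m‖ := by simp
    _ ≤ ‖DT xbar (Pi.single i v) m‖ + ‖(DT z - DT xbar) (Pi.single i v) m‖ := norm_add_le _ _
    _ ≤ _ := by rw [add_mul]; exact add_le_add (hZ m i v) (hW z hz m i v)

theorem mapsTo_box_of_radii_bound (hT : ∀ x ∈ box xbar rstar, HasFDerivAt T (DT x) x)
    (hZ : ∀ m i, ∀ h : X i, ‖DT xbar (Pi.single i h) m‖ ≤ Z m i * ‖h‖)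
    (hW : ∀ x ∈ box xbar rstar, ∀ m i, ∀ h : X i,
      ‖(DT x - DT xbar) (Pi.single i h) m‖ ≤ (∑ j, W m i j * ‖x j - xbar j‖) * ‖h‖)
    (hZ0 : ∀ m i, 0 ≤ Z m i) (hW0 : ∀ m i j, 0 ≤ W m i j) {Y : ι → ℝ}
    (hY : ∀ m, ‖T xbar m - xbar m‖ ≤ Y m) (hr : 0 ≤ r) (hrle : r ≤ rstar)
    (hrad : ∀ m, Y m + (∑ i, Z m i * r i) + (1 / 2) * ∑ i, ∑ j, W m i j * r i * r j ≤ r m) :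
    MapsTo T (box xbar r) (box xbar r) := by
  intro x hx m
  have hxbar : xbar ∈ box xbar r := center_mem_box hr
  have hdiff : ‖T x m - T xbar m‖
      ≤ (∑ i, Z m i * r i) + (∑ i, ∑ j, W m i j * r i * r j) / 2 := by
    refine convex_box.norm_sub_le_of_hasFDerivAt_of_norm_le_add_mul
      (fun z hz => hasFDerivAt_pi'.1 (hT z hz) m) (box_mono hrle hxbar) (box_mono hrle hx)
      fun t ht => ?_
    have hzt := convex_box.add_smul_sub_mem hxbar hx ht
    have hdist (j : ι) : ‖(xbar + t • (x - xbar)) j - xbar j‖ ≤ t * r j := by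
      simpa [norm_smul, abs_of_nonneg ht.1] using mul_le_mul_of_nonneg_left (hx j) ht.1
    calc _ ≤ ∑ i, (Z m i + ∑ j, W m i j * ‖(xbar + t • (x - xbar)) j - xbar j‖) *
            ‖(x - xbar) i‖ :=
          norm_deriv_apply_le_sum hZ hW (box_mono hrle hzt) _ m
      _ ≤ ∑ i, (Z m i + ∑ j, W m i j * (t * r j)) * r i := by
          gcongr with i _ j _
          · exact add_nonneg (hZ0 m i) (Finset.sum_nonneg fun j _ =>
              mul_nonneg (hW0 m i j) (mul_nonneg ht.1 (hr j)))
          · exact hW0 m i j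
          · exact hdist j
          · exact hx i
      _ = (∑ i, Z m i * r i) + t * ∑ i, ∑ j, W m i j * r i * r j := by
          simp only [add_mul, Finset.sum_add_distrib, Finset.sum_mul, Finset.mul_sum]
          congr 1
          exact Finset.sum_congr rfl fun i _ => Finset.sum_congr rfl fun j _ => by ring
  calc ‖T x m - xbar m‖ ≤ ‖T x m - T xbar m‖ + ‖T xbar m - xbar m‖ :=
        norm_sub_le_norm_sub_add_norm_sub _ _ _
    _ ≤ r m := by linarith [hY m, hrad m]

theorem norm_apply_sub_apply_le_of_mem_box (hT : ∀ x ∈ box xbar rstar, HasFDerivAt T (DT x) x)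
    (hZ : ∀ m i, ∀ h : X i, ‖DT xbar (Pi.single i h) m‖ ≤ Z m i * ‖h‖)
    (hW : ∀ x ∈ box xbar rstar, ∀ m i, ∀ h : X i,
      ‖(DT x - DT xbar) (Pi.single i h) m‖ ≤ (∑ j, W m i j * ‖x j - xbar j‖) * ‖h‖)
    (hW0 : ∀ m i j, 0 ≤ W m i j) (hrle : r ≤ rstar) {x y : ∀ i, X i} (hx : x ∈ box xbar r)
    (hy : y ∈ box xbar r) (m : ι) :
    ‖T y m - T x m‖ ≤ ∑ i, (Z m i + ∑ j, W m i j * r j) * ‖y i - x i‖ := by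
  simpa using convex_box.norm_sub_le_of_hasFDerivAt_of_norm_le_add_mul
    (fun z hz => hasFDerivAt_pi'.1 (hT z hz) m) (box_mono hrle hx) (box_mono hrle hy) (b := 0)
    fun t ht => by
      have hzt := convex_box.add_smul_sub_mem hx hy ht
      calc _ ≤ ∑ i, (Z m i + ∑ j, W m i j * ‖(x + t • (y - x)) j - xbar j‖) * ‖(y - x) i‖ :=
            norm_deriv_apply_le_sum hZ hW (box_mono hrle hzt) _ m
        _ ≤ ∑ i, (Z m i + ∑ j, W m i j * r j) * ‖(y - x) i‖ + t * 0 := by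
            rw [mul_zero, add_zero]
            gcongr with i _ j _
            · exact hW0 m i _
            · exact hzt _

end RadiiPolynomial

theorem stmt4_fixed_point_product_general {M : ℕ}
    (X : Fin M → Type*) [∀ m, NormedAddCommGroup (X m)] [∀ m, NormedSpace ℝ (X m)]
    [∀ m, CompleteSpace (X m)]
    (xbar : ∀ m, X m) (rstar : Fin M → ℝ)
    (T : (∀ m, X m) → ∀ m, X m)
    (DT : (∀ m, X m) → ((∀ m, X m) →L[ℝ] ∀ m, X m))
    (hC1 : ∀ x : ∀ m, X m, (∀ m, ‖x m - xbar m‖ ≤ rstar m) → HasFDerivAt T (DT x) x)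
    (Y : Fin M → ℝ) (Z : Fin M → Fin M → ℝ) (W : Fin M → Fin M → Fin M → ℝ)
    (hZ0 : ∀ m i, 0 ≤ Z m i) (hW0 : ∀ m i j, 0 ≤ W m i j)
    (hY : ∀ m, ‖T xbar m - xbar m‖ ≤ Y m)
    (hZ : ∀ m i, ∀ h : X i, ‖DT xbar (Pi.single i h) m‖ ≤ Z m i * ‖h‖)
    (hW : ∀ x : ∀ m, X m, (∀ m, ‖x m - xbar m‖ ≤ rstar m) →
      ∀ m i, ∀ h : X i,
        ‖(DT x - DT xbar) (Pi.single i h) m‖ ≤ (∑ j, W m i j * ‖x j - xbar j‖) * ‖h‖)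
    (r η : Fin M → ℝ) (hr0 : ∀ m, 0 < r m) (hrle : ∀ m, r m ≤ rstar m)
    (hη : ∀ m, 0 < η m)
    (h1 : ∀ m, Y m + (∑ i, Z m i * r i) + (1 / 2) * ∑ i, ∑ j, W m i j * r i * r j ≤ r m)
    (h2 : ∀ m, (∑ i, Z m i * η i) + (∑ i, ∑ j, W m i j * η i * r j) < η m) :
    ∃! x : ∀ m, X m, (∀ m, ‖x m - xbar m‖ ≤ r m) ∧ T x = x := by
  set L : Fin M → Fin M → ℝ := fun m i => Z m i + ∑ j, W m i j * r j
  have hL0 (m i : Fin M) : 0 ≤ L m i :=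
    add_nonneg (hZ0 m i) (Finset.sum_nonneg fun j _ => mul_nonneg (hW0 m i j) (hr0 j).le)
  have hLη (m : Fin M) : ∑ i, L m i * η i < η m := by
    convert h2 m using 1
    simp only [L, add_mul, Finset.sum_add_distrib, Finset.sum_mul, mul_right_comm _ (r _) (η _)]
  obtain ⟨K, hK1, hK⟩ := exists_lt_one_forall_le_mul hη hLη
  have hr : 0 ≤ r := fun m => (hr0 m).le
  exact (rescale hη).existsUnique_fixedPoint_of_dist_le_mul isClosed_box ⟨xbar, center_mem_box hr⟩
    (mapsTo_box_of_radii_bound hC1 hZ hW hZ0 hW0 hY hr hrle h1) hK1 fun x hx y hy =>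
      dist_rescale_le_mul_of_le_sum hη hL0 hK
        (norm_apply_sub_apply_le_of_mem_box hC1 hZ hW hW0 hrle hy hx)

/-- Fixed point theorem on a product of Banach spaces (Theorem 2.12 of the paper):
with componentwise bounds `Y^m`, `Z^m_i`, `W^m_{ij}` on the residual, the partial
derivatives, and the Lipschitz constants of the partial derivatives of `T` in the box
`box(x̄, r*)`, and radii `r ≤ r*`, weights `η > 0` satisfying the radii polynomial
inequalities, `T` has a unique fixed point in `box(x̄, r)`. -/
theorem stmt4_fixed_point_product {M : ℕ} (hM : 1 ≤ M)
    (X : Fin M → Type*) [∀ m, NormedAddCommGroup (X m)] [∀ m, NormedSpace ℝ (X m)]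
    [∀ m, CompleteSpace (X m)]
    (xbar : ∀ m, X m) (rstar : Fin M → ℝ) (hrstar : ∀ m, 0 < rstar m)
    (T : (∀ m, X m) → ∀ m, X m)
    (DT : (∀ m, X m) → ((∀ m, X m) →L[ℝ] ∀ m, X m))
    (hC1 : ∀ x : ∀ m, X m, (∀ m, ‖x m - xbar m‖ ≤ rstar m) → HasFDerivAt T (DT x) x)
    (Y : Fin M → ℝ) (Z : Fin M → Fin M → ℝ) (W : Fin M → Fin M → Fin M → ℝ)
    (hY0 : ∀ m, 0 ≤ Y m) (hZ0 : ∀ m i, 0 ≤ Z m i) (hW0 : ∀ m i j, 0 ≤ W m i j)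
    (hY : ∀ m, ‖T xbar m - xbar m‖ ≤ Y m)
    (hZ : ∀ m i, ∀ h : X i, ‖DT xbar (Pi.single i h) m‖ ≤ Z m i * ‖h‖)
    (hW : ∀ x : ∀ m, X m, (∀ m, ‖x m - xbar m‖ ≤ rstar m) →
      ∀ m i, ∀ h : X i,
        ‖(DT x - DT xbar) (Pi.single i h) m‖ ≤ (∑ j, W m i j * ‖x j - xbar j‖) * ‖h‖)
    (r η : Fin M → ℝ) (hr0 : ∀ m, 0 < r m) (hrle : ∀ m, r m ≤ rstar m)
    (hη : ∀ m, 0 < η m)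
    (h1 : ∀ m, Y m + (∑ i, Z m i * r i) + (1 / 2) * ∑ i, ∑ j, W m i j * r i * r j ≤ r m)
    (h2 : ∀ m, (∑ i, Z m i * η i) + (∑ i, ∑ j, W m i j * η i * r j) < η m) :
    ∃! x : ∀ m, X m, (∀ m, ‖x m - xbar m‖ ≤ r m) ∧ T x = x :=
  stmt4_fixed_point_product_general X xbar rstar T DT hC1 Y Z W hZ0 hW0 hY hZ hW r η hr0 hrle hη h1
    h2
end
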